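/- Let G be a finite group, (U_g, ω) a projective unitary representation of G on ℂⁿ with U_e = 1, and ρ a density matrix on ℂⁿ. Then the averaged logarithmic characteristic function of ρ vanishes, in the sense that |Tr(U_g · ρ)| = 1 for every g ∈ G, if and only if ρ is strong symmetric with respect to U, i.e. there exists θ : G → ℝ such that U_g · ρ = e^{iθ(g)} • ρ for all g ∈ G. -/

import Mathlib

open Matrix
open scoped ComplexOrder

private noncomputable def toE {n : ℕ} (A : Matrix (Fin n) (Fin n) ℂ) :
    EuclideanSpace ℂ (Fin n × Fin n) :=
  WithLp.toLp 2 (fun p : Fin n × Fin n => A p.1 p.2)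

private lemma inner_toE {n : ℕ} (A B : Matrix (Fin n) (Fin n) ℂ) :
    (inner ℂ (toE A) (toE B) : ℂ) = (Aᴴ * B).trace := by
  simp [toE, PiLp.inner_apply, Matrix.trace, Matrix.mul_apply,
    Matrix.conjTranspose_apply, Fintype.sum_prod_type, Matrix.diag]
  rw [Finset.sum_comm]
  simp only [mul_comm]

private lemma toE_eq_zero {n : ℕ} {A : Matrix (Fin n) (Fin n) ℂ} (h : toE A = 0) : A = 0 := by
  ext i j
  have := congrArg (fun v => v (i, j)) h
  simpa [toE] using this

/-- **Faithfulness of the averaged logarithmic characteristic function: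
`|Tr(U_g ρ)| = 1` for every `g` iff `ρ` is strong symmetric.** -/
theorem averaged_log_characteristic_function_faithful
    {G : Type*} [Group G] [Fintype G] {n : ℕ}
    (U : G → Matrix (Fin n) (Fin n) ℂ) (ω : G → G → ℂ)
    (hUunit : ∀ g, (U g)ᴴ * U g = 1)
    (hUmul : ∀ g h, U g * U h = ω g h • U (g * h))
    (hUone : U 1 = 1)
    (ρ : Matrix (Fin n) (Fin n) ℂ)
    (hρ : ρ.PosSemidef) (hρtr : ρ.trace = 1) :
    (∀ g : G, ‖(U g * ρ).trace‖ = 1) ↔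
      ∃ θ : G → ℝ, ∀ g : G, U g * ρ = Complex.exp (Complex.I * (θ g : ℂ)) • ρ := by
  constructor
  · intro habs
    set A := (open scoped MatrixOrder in CFC.sqrt ρ) with hA
    have hAH : Aᴴ = A := (open scoped MatrixOrder in (CFC.sqrt_nonneg ρ).posSemidef).1
    have hAA : A * A = ρ := (open scoped MatrixOrder in CFC.sqrt_mul_sqrt_self ρ hρ.nonneg)
    -- norms
    have hselfA : (inner ℂ (toE A) (toE A) : ℂ) = 1 := by
      rw [inner_toE, hAH, hAA, hρtr]
    have hnormA : ‖toE A‖ = 1 := by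
      have h2 : ‖toE A‖^2 = 1 := by
        rw [← inner_self_eq_norm_sq (𝕜 := ℂ), hselfA]; simp
      nlinarith [norm_nonneg (toE A)]
    have hAne : toE A ≠ 0 := by
      intro h; rw [h, norm_zero] at hnormA; norm_num at hnormA
    refine ⟨fun g => (((U g * ρ).trace : ℂ)).arg, fun g => ?_⟩
    -- key inner product identity
    have hkey : (inner ℂ (toE A) (toE (U g * A)) : ℂ) = (U g * ρ).trace := by
      rw [inner_toE, hAH, ← hAA, ← Matrix.mul_assoc, Matrix.mul_assoc,
        Matrix.trace_mul_comm, Matrix.mul_assoc]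
    have hnormUA : ‖toE (U g * A)‖ = 1 := by
      have hself : (inner ℂ (toE (U g * A)) (toE (U g * A)) : ℂ) = 1 := by
        rw [inner_toE, Matrix.conjTranspose_mul, hAH, Matrix.mul_assoc,
          ← Matrix.mul_assoc (U g)ᴴ, hUunit, Matrix.one_mul, hAA, hρtr]
      have h2 : ‖toE (U g * A)‖^2 = 1 := by
        rw [← inner_self_eq_norm_sq (𝕜 := ℂ), hself]; simp
      nlinarith [norm_nonneg (toE (U g * A))]
    have hUAne : toE (U g * A) ≠ 0 := by
      intro h; rw [h, norm_zero] at hnormUA; norm_num at hnormUA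
    have heq : ‖(inner ℂ (toE A) (toE (U g * A)) : ℂ)‖ = ‖toE A‖ * ‖toE (U g * A)‖ := by
      rw [hkey, hnormA, hnormUA, mul_one]
      exact habs g
    obtain ⟨r, hr0, hr⟩ := (norm_inner_eq_norm_iff hAne hUAne).1 heq
    -- U g * A = r • A
    have hUA : U g * A = r • A := by
      ext i j
      have := congrArg (fun v => v (i, j)) hr
      simpa [toE] using this
    have hUρ : U g * ρ = r • ρ := by
      rw [← hAA, ← Matrix.mul_assoc, hUA, Matrix.smul_mul]
    -- trace gives r
    have htr : (U g * ρ).trace = r := by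
      rw [hUρ, Matrix.trace_smul, hρtr, smul_eq_mul, mul_one]
    have habs1 : ‖r‖ = 1 := by rw [← htr]; exact habs g
    have : Complex.exp (Complex.I * ((U g * ρ).trace.arg : ℂ)) = r := by
      rw [mul_comm]
      have := Complex.norm_mul_exp_arg_mul_I ((U g * ρ).trace)
      rw [htr] at this ⊢
      rw [habs1] at this
      simpa using this
    rw [this]
    exact hUρ
  · intro ⟨θ, hθ⟩ g
    rw [hθ g, Matrix.trace_smul, hρtr, smul_eq_mul, mul_one, Complex.norm_exp]
    simp
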